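/- Let R → S be a ring homomorphism, B, N ⊆ M R-modules. Then the image of S ⊗_R N^{cl_B}_M in S ⊗_R M is contained in the cl_{S⊗_R B}-closure of the image of S ⊗_R N in S ⊗_R M. -/

import Mathlib

open TensorProduct

/-- The module closure `N^{cl_B}_M`: the set of `u ∈ M` with
`b ⊗ u ∈ Im(B ⊗ N → B ⊗ M)` for all `b ∈ B`. -/
def modClosure (R : Type) [CommRing R] (B : Type) [AddCommGroup B] [Module R B]
    {M : Type} [AddCommGroup M] [Module R M] (N : Submodule R M) : Submodule R M where
  carrier := {u | ∀ b : B, b ⊗ₜ[R] u ∈ LinearMap.range (LinearMap.lTensor B N.subtype)}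
  add_mem' := fun ha hb b => by
    rw [TensorProduct.tmul_add]; exact add_mem (ha b) (hb b)
  zero_mem' := fun b => by
    rw [TensorProduct.tmul_zero]; exact zero_mem _
  smul_mem' := fun r x hx b => by
    rw [TensorProduct.tmul_smul]; exact Submodule.smul_mem _ r (hx b)

/-- For a ring map `R → S` and `R`-modules `B`, `N ⊆ M`, the image of
`S ⊗_R N^{cl_B}_M` in `S ⊗_R M` is contained in the `cl_{S ⊗_R B}`-closure of the image of
`S ⊗_R N` in `S ⊗_R M`. -/
theorem stmt_8 (R S : Type) [CommRing R] [CommRing S] [Algebra R S]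
    (B M : Type) [AddCommGroup B] [Module R B] [AddCommGroup M] [Module R M]
    (N : Submodule R M) :
    LinearMap.range (LinearMap.baseChange S (modClosure R B N).subtype) ≤
      modClosure S (S ⊗[R] B) (LinearMap.range (LinearMap.baseChange S N.subtype)) := by
  rintro _ ⟨y, rfl⟩
  induction y using TensorProduct.induction_on with
  | zero =>
    rw [map_zero]; exact zero_mem _
  | tmul s u =>
    obtain ⟨u, hu⟩ := u
    intro b
    induction b using TensorProduct.induction_on with
    | zero => rw [TensorProduct.zero_tmul]; exact zero_mem _
    | tmul s' b0 =>
      -- define ψ : B ⊗[R] M →ₗ[R] (S ⊗[R] B) ⊗[S] (S ⊗[R] M)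
      let ψ : B ⊗[R] M →ₗ[R] (S ⊗[R] B) ⊗[S] (S ⊗[R] M) :=
        TensorProduct.lift
          (LinearMap.mk₂ R (fun c m => (s' ⊗ₜ[R] c) ⊗ₜ[S] (s ⊗ₜ[R] m))
            (fun c₁ c₂ m => by
              simp only [TensorProduct.tmul_add, TensorProduct.add_tmul])
            (fun r c m => by
              simp only [TensorProduct.tmul_smul, TensorProduct.smul_tmul'])
            (fun c m₁ m₂ => by
              simp only [TensorProduct.tmul_add])
            (fun r c m => by
              simp only [TensorProduct.tmul_smul]))
      have key : ∀ w : B ⊗[R] (N : Submodule R M),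
          ψ (LinearMap.lTensor B N.subtype w) ∈
            LinearMap.range (LinearMap.lTensor (S ⊗[R] B)
              (LinearMap.range (LinearMap.baseChange S N.subtype)).subtype) := by
        intro w
        induction w using TensorProduct.induction_on with
        | zero => rw [map_zero, map_zero]; exact zero_mem _
        | tmul c n =>
          refine ⟨(s' ⊗ₜ[R] c) ⊗ₜ[S]
            ⟨s ⊗ₜ[R] (n : M), ⟨s ⊗ₜ[R] n, rfl⟩⟩, ?_⟩
          simp [ψ, LinearMap.lTensor_tmul]
          rfl
        | add w₁ w₂ h₁ h₂ => rw [map_add, map_add]; exact add_mem h₁ h₂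
      have hb := hu b0
      obtain ⟨w, hw⟩ := hb
      have := key w
      rw [hw] at this
      simp [ψ, LinearMap.baseChange_tmul] at this
      exact this
    | add b₁ b₂ h₁ h₂ => rw [TensorProduct.add_tmul]; exact add_mem h₁ h₂
  | add y₁ y₂ h₁ h₂ =>
    rw [map_add]
    exact add_mem h₁ h₂
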